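/- arXiv:1706.02152 — 2 statements merged into one kernel-verified Lean document; each statement's English description precedes it below -/
import Mathlib

section
/- Let $v \in C^2([0,1]\times[0,\infty))$ solve $v_{tt}=v_{xx}$, and let $E(t) = \int_0^1 [v_x^2(x,t)+v_t^2(x,t)]\,dx$. Then for every $t \ge 1$, $\int_0^1 v_t^2(0, t-x)\,dx \le 3 \max_{s\in[t-1,t]} E(s)$. -/
/-!
The Riemann invariants `vₜ + vₓ` and `vₜ - vₓ` are constant along the characteristics
`x + t = const` and `x - t = const`. Following them from the boundary point `(0, t - x)` to
`(1 - x, t - 1)` and to `(x, t)` expresses `2 vₜ(0, t - x)` through the solution on the time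
slices `t - 1` and `t`. As `(vₜ ± vₓ)² ≤ 2 (vₓ² + vₜ²)`, squaring and integrating over `x` gives
`∫₀¹ vₜ²(0, t - x) dx ≤ E(t - 1) + E(t) ≤ 2 max E`.
-/

open MeasureTheory Set

section Calculus

variable {E F : Type*} [NormedAddCommGroup E] [NormedSpace ℝ E]
  [NormedAddCommGroup F] [NormedSpace ℝ F]

theorem DifferentiableAt.hasDerivAt_comp_prodMk_const {f : ℝ × ℝ → F} {x t : ℝ}
    (hf : DifferentiableAt ℝ f (x, t)) :
    HasDerivAt (fun y => f (y, t)) (fderiv ℝ f (x, t) (1, 0)) x :=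
  hf.hasFDerivAt.comp_hasDerivAt x ((hasDerivAt_id x).prodMk (hasDerivAt_const x t))

theorem DifferentiableAt.hasDerivAt_comp_const_prodMk {f : ℝ × ℝ → F} {x t : ℝ}
    (hf : DifferentiableAt ℝ f (x, t)) :
    HasDerivAt (fun s => f (x, s)) (fderiv ℝ f (x, t) (0, 1)) t :=
  hf.hasFDerivAt.comp_hasDerivAt t ((hasDerivAt_const t x).prodMk (hasDerivAt_id t))

theorem DifferentiableAt.hasDerivAt_apply_comp_prodMk_const {g : ℝ × ℝ → E →L[ℝ] F} {x t : ℝ}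
    (hg : DifferentiableAt ℝ g (x, t)) (w : E) :
    HasDerivAt (fun y => g (y, t) w) (fderiv ℝ g (x, t) (1, 0) w) x := by
  have h := hg.hasDerivAt_comp_prodMk_const.clm_apply (hasDerivAt_const x w)
  simp only [map_zero, add_zero] at h
  exact h

theorem DifferentiableAt.hasDerivAt_apply_comp_const_prodMk {g : ℝ × ℝ → E →L[ℝ] F} {x t : ℝ}
    (hg : DifferentiableAt ℝ g (x, t)) (w : E) :
    HasDerivAt (fun s => g (x, s) w) (fderiv ℝ g (x, t) (0, 1) w) t := by
  have h := hg.hasDerivAt_comp_const_prodMk.clm_apply (hasDerivAt_const t w)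
  simp only [map_zero, add_zero] at h
  exact h

theorem hasDerivAt_apply_add_smul {g : E → E →L[ℝ] F} {z u : E} {r : ℝ} (w : E)
    (hg : DifferentiableAt ℝ g (z + r • u)) :
    HasDerivAt (fun s : ℝ => g (z + s • u) w) (fderiv ℝ g (z + r • u) u w) r := by
  have hline : HasDerivAt (fun s : ℝ => z + s • u) u r := by
    simpa only [one_smul] using ((hasDerivAt_id' r).smul_const u).const_add z
  have hcomp := hg.hasFDerivAt.comp_hasDerivAt r hline
  have h := hcomp.clm_apply (hasDerivAt_const r w)
  simp only [map_zero, add_zero] at h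
  exact h

theorem apply_add_smul_eq_of_fderiv_apply_eq_zero {g : E → E →L[ℝ] ℝ}
    (hg : Differentiable ℝ g) {z u w : E} {L : ℝ} (hL : 0 ≤ L)
    (h : ∀ s ∈ Ioo 0 L, fderiv ℝ g (z + s • u) u w = 0) :
    g (z + L • u) w = g z w := by
  rcases hL.eq_or_lt with rfl | hL
  · simp
  have hcont : Continuous fun s : ℝ => g (z + s • u) w :=
    (hg.continuous.comp (continuous_const.add (continuous_id.smul continuous_const))).clm_apply
      continuous_const
  obtain ⟨c, hc, hslope⟩ := exists_hasDerivAt_eq_slope (fun s : ℝ => g (z + s • u) w) _ hL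
    hcont.continuousOn fun s _ => hasDerivAt_apply_add_smul w (hg _)
  rw [h c hc, eq_comm, div_eq_zero_iff, sub_eq_zero] at hslope
  simpa [hL.ne'] using hslope

theorem apply_sub_apply_add_of_symm {B : E →L[ℝ] E →L[ℝ] F}
    (hB : ∀ v w, B v w = B w v) (a b : E) :
    B (a - b) (a + b) = B a a - B b b := by
  simp only [map_sub, map_add, sub_apply, hB b a]
  abel

theorem apply_add_apply_sub_of_symm {B : E →L[ℝ] E →L[ℝ] F}
    (hB : ∀ v w, B v w = B w v) (a b : E) :
    B (a + b) (a - b) = B a a - B b b := by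
  rw [hB, apply_sub_apply_add_of_symm hB]

end Calculus

section WaveEquation

variable {f : ℝ × ℝ → ℝ}

-- Points of `ℝ × ℝ` are `(x, t)`, so `(1, 0)` and `(0, 1)` are the directions of `∂ₓ` and `∂ₜ`.
def WaveEqOn (f : ℝ × ℝ → ℝ) (s : Set (ℝ × ℝ)) : Prop :=
  ∀ z ∈ s, fderiv ℝ (fderiv ℝ f) z (1, 0) (1, 0) = fderiv ℝ (fderiv ℝ f) z (0, 1) (0, 1)

noncomputable def waveEnergyDensity (f : ℝ × ℝ → ℝ) (z : ℝ × ℝ) : ℝ :=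
  fderiv ℝ f z (1, 0) ^ 2 + fderiv ℝ f z (0, 1) ^ 2

noncomputable def waveEnergy (f : ℝ × ℝ → ℝ) (t : ℝ) : ℝ :=
  ∫ x in (0:ℝ)..1, waveEnergyDensity f (x, t)

theorem waveEnergy_nonneg (f : ℝ × ℝ → ℝ) (t : ℝ) : 0 ≤ waveEnergy f t :=
  intervalIntegral.integral_nonneg zero_le_one fun _ _ => by
    unfold waveEnergyDensity; positivity

theorem continuous_waveEnergyDensity (hf : ContDiff ℝ 1 f) :
    Continuous (waveEnergyDensity f) := by
  have hD := hf.continuous_fderiv one_ne_zero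
  unfold waveEnergyDensity
  fun_prop

theorem continuous_waveEnergy (hf : ContDiff ℝ 1 f) : Continuous (waveEnergy f) :=
  intervalIntegral.continuous_parametric_intervalIntegral_of_continuous'
    (f := fun t x => waveEnergyDensity f (x, t))
    ((continuous_waveEnergyDensity hf).comp continuous_swap) 0 1

theorem two_mul_fderiv_apply_zero_one_eq_of_wave (hf : ContDiff ℝ 2 f)
    (hwave : WaveEqOn f (Ioo 0 1 ×ˢ Ioi 0))
    {t x : ℝ} (ht : 1 ≤ t) (hx : x ∈ Icc (0:ℝ) 1) :
    2 * fderiv ℝ f (0, t - x) (0, 1) =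
      fderiv ℝ f (1 - x, t - 1) (1, 1) + fderiv ℝ f (x, t) (-1, 1) := by
  have hD : Differentiable ℝ (fderiv ℝ f) :=
    (hf.fderiv_right (by norm_num)).differentiable one_ne_zero
  have hsymm (z : ℝ × ℝ) : ∀ a b, fderiv ℝ (fderiv ℝ f) z a b = fderiv ℝ (fderiv ℝ f) z b a :=
    hf.contDiffAt.isSymmSndFDerivAt (by simp)
  have hderiv_plus : ∀ z ∈ Ioo (0:ℝ) 1 ×ˢ Ioi 0, fderiv ℝ (fderiv ℝ f) z (1, -1) (1, 1) = 0 :=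
    fun z hz => by
      rw [show ((1 : ℝ), (-1 : ℝ)) = (1, 0) - (0, 1) by simp,
        show ((1 : ℝ), (1 : ℝ)) = (1, 0) + (0, 1) by simp,
        apply_sub_apply_add_of_symm (hsymm z), hwave z hz, sub_self]
  have hderiv_minus : ∀ z ∈ Ioo (0:ℝ) 1 ×ˢ Ioi 0, fderiv ℝ (fderiv ℝ f) z (1, 1) (-1, 1) = 0 :=
    fun z hz => by
      rw [show ((1 : ℝ), (1 : ℝ)) = (0, 1) + (1, 0) by simp,
        show ((-1 : ℝ), (1 : ℝ)) = (0, 1) - (1, 0) by simp,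
        apply_add_apply_sub_of_symm (hsymm z), hwave z hz, sub_self]
  have hplus : fderiv ℝ f (1 - x, t - 1) (1, 1) = fderiv ℝ f (0, t - x) (1, 1) := by
    have h := apply_add_smul_eq_of_fderiv_apply_eq_zero hD (z := (0, t - x)) (u := (1, -1))
      (w := (1, 1)) (L := 1 - x) (by linarith [hx.2]) fun s ⟨hs₀, hs₁⟩ => hderiv_plus _ (by
        simp only [Prod.smul_mk, Prod.mk_add_mk, smul_eq_mul, mem_prod, mem_Ioo, mem_Ioi]
        exact ⟨⟨by linarith, by linarith [hx.1]⟩, by linarith⟩)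
    convert h using 3
    ext <;> simp
  have hminus : fderiv ℝ f (x, t) (-1, 1) = fderiv ℝ f (0, t - x) (-1, 1) := by
    have h := apply_add_smul_eq_of_fderiv_apply_eq_zero hD (z := (0, t - x)) (u := (1, 1))
      (w := (-1, 1)) (L := x) hx.1 fun s ⟨hs₀, hs₁⟩ => hderiv_minus _ (by
        simp only [Prod.smul_mk, Prod.mk_add_mk, smul_eq_mul, mem_prod, mem_Ioo, mem_Ioi]
        exact ⟨⟨by linarith, by linarith [hx.2]⟩, by linarith [hx.2]⟩)
    convert h using 3
    ext <;> simp
  rw [hplus, hminus, ← map_add, show ((1 : ℝ), (1 : ℝ)) + (-1, 1) = (2 : ℝ) • (0, 1) by norm_num,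
    map_smul, smul_eq_mul]

theorem sq_fderiv_apply_zero_one_le_of_wave (hf : ContDiff ℝ 2 f)
    (hwave : WaveEqOn f (Ioo 0 1 ×ˢ Ioi 0)) {t x : ℝ} (ht : 1 ≤ t) (hx : x ∈ Icc (0:ℝ) 1) :
    fderiv ℝ f (0, t - x) (0, 1) ^ 2 ≤
      waveEnergyDensity f (1 - x, t - 1) + waveEnergyDensity f (x, t) := by
  have h := two_mul_fderiv_apply_zero_one_eq_of_wave hf hwave ht hx
  rw [show ((1 : ℝ), (1 : ℝ)) = (1, 0) + (0, 1) by simp,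
    show ((-1 : ℝ), (1 : ℝ)) = (0, 1) - (1, 0) by simp, map_add, map_sub] at h
  unfold waveEnergyDensity
  generalize fderiv ℝ f (1 - x, t - 1) (1, 0) = a, fderiv ℝ f (1 - x, t - 1) (0, 1) = b,
    fderiv ℝ f (x, t) (0, 1) = c, fderiv ℝ f (x, t) (1, 0) = d, fderiv ℝ f (0, t - x) (0, 1) = v
    at h ⊢
  obtain rfl : v = (a + b + (c - d)) / 2 := by linarith
  nlinarith [sq_nonneg (a + b - c + d), sq_nonneg (a - b), sq_nonneg (c + d)]

theorem integral_sq_fderiv_apply_zero_one_le_of_wave (hf : ContDiff ℝ 2 f)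
    (hwave : WaveEqOn f (Ioo 0 1 ×ˢ Ioi 0)) {t : ℝ} (ht : 1 ≤ t) :
    ∫ x in (0:ℝ)..1, fderiv ℝ f (0, t - x) (0, 1) ^ 2 ≤ waveEnergy f (t - 1) + waveEnergy f t := by
  have hf1 : ContDiff ℝ 1 f := hf.of_le (by norm_num)
  have he := continuous_waveEnergyDensity hf1
  have hD := hf1.continuous_fderiv one_ne_zero
  calc ∫ x in (0:ℝ)..1, fderiv ℝ f (0, t - x) (0, 1) ^ 2
      ≤ ∫ x in (0:ℝ)..1, (waveEnergyDensity f (1 - x, t - 1) + waveEnergyDensity f (x, t)) :=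
        intervalIntegral.integral_mono_on zero_le_one
          (Continuous.intervalIntegrable (by fun_prop) _ _)
          (Continuous.intervalIntegrable (by fun_prop) _ _)
          fun x hx => sq_fderiv_apply_zero_one_le_of_wave hf hwave ht hx
    _ = waveEnergy f (t - 1) + waveEnergy f t := by
        rw [intervalIntegral.integral_add (Continuous.intervalIntegrable (by fun_prop) _ _)
          (Continuous.intervalIntegrable (by fun_prop) _ _),
          intervalIntegral.integral_comp_sub_left (fun x => waveEnergyDensity f (x, t - 1))]
        simp [waveEnergy]

end WaveEquation

/-- Boundary-trace estimate: for a classical solution of the 1-D wave equation with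
energy `E(t) = ∫₀¹ (vₓ² + vₜ²) dx`, for all `t ≥ 1`,
`∫₀¹ vₜ²(0, t-x) dx ≤ 3 max_{s ∈ [t-1,t]} E(s)`. -/
theorem stmt2
    (v vx vt vxx vtt : ℝ → ℝ → ℝ)
    (hsm : ContDiff ℝ 2 (Function.uncurry v))
    (hvx : ∀ x t, HasDerivAt (fun y => v y t) (vx x t) x)
    (hvt : ∀ x t, HasDerivAt (fun s => v x s) (vt x t) t)
    (hvxx : ∀ x t, HasDerivAt (fun y => vx y t) (vxx x t) x)
    (hvtt : ∀ x t, HasDerivAt (fun s => vt x s) (vtt x t) t)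
    (hwave : ∀ x ∈ Ioo (0:ℝ) 1, ∀ t > (0:ℝ), vtt x t = vxx x t)
    (E : ℝ → ℝ)
    (hE : ∀ t, E t = ∫ x in (0:ℝ)..1, (vx x t ^ 2 + vt x t ^ 2)) :
    ∀ t ≥ (1:ℝ),
      (∫ x in (0:ℝ)..1, vt 0 (t - x) ^ 2) ≤ 3 * sSup (E '' Icc (t - 1) t) := by
  intro t ht
  set f := Function.uncurry v
  have hf : Differentiable ℝ f := hsm.differentiable two_ne_zero
  have hD : Differentiable ℝ (fderiv ℝ f) :=
    (hsm.fderiv_right (by norm_num)).differentiable one_ne_zero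
  have hvx' (x s : ℝ) : vx x s = fderiv ℝ f (x, s) (1, 0) :=
    (hvx x s).unique (hf _).hasDerivAt_comp_prodMk_const
  have hvt' (x s : ℝ) : vt x s = fderiv ℝ f (x, s) (0, 1) :=
    (hvt x s).unique (hf _).hasDerivAt_comp_const_prodMk
  have hwave' : WaveEqOn f (Ioo 0 1 ×ˢ Ioi 0) := by
    rintro ⟨x, s⟩ ⟨hx, hs⟩
    simp only [hvx'] at hvxx
    simp only [hvt'] at hvtt
    rw [← (hvxx x s).unique ((hD _).hasDerivAt_apply_comp_prodMk_const _),
      ← (hvtt x s).unique ((hD _).hasDerivAt_apply_comp_const_prodMk _), hwave x hx s hs]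
  have hE' : E = waveEnergy f :=
    funext fun s => by simp only [hE, hvx', hvt', waveEnergy, waveEnergyDensity]
  have hcont := (continuous_waveEnergy (hsm.of_le one_le_two)).continuousOn (s := Icc (t - 1) t)
  have hsup₀ := hcont.le_sSup_image_Icc (c := t - 1) ⟨le_rfl, by linarith⟩
  have hsup₁ := hcont.le_sSup_image_Icc (c := t) ⟨by linarith, le_rfl⟩
  have htrace := integral_sq_fderiv_apply_zero_one_le_of_wave hsm hwave' ht
  simp only [hvt', hE']
  linarith [waveEnergy_nonneg f t]
end

section
/- Let $q > 0$, $q \ne 1$, and $c_0$ be such that $\frac{c_0 - q}{1-c_0} > 0$ and $c_0 \in \mathbb{R}\setminus\{1\}$. Suppose $w$ solves the wave equation $w_{tt}=w_{xx}$ on $(0,1)$ with anti-damping boundary condition $w_x(0,t) = -q\,w_t(0,t)$, and $Z$ solves the transport equation $Z_t = -Z_x$ with $Z(0,t) = -c_0\, w(0,t)$. Then $\tilde w := w + Z$ satisfies the wave equation $\tilde w_{tt} = \tilde w_{xx}$ with the damped boundary condition $\tilde w_x(0,t) = \frac{c_0-q}{1-c_0}\, \tilde w_t(0,t)$, provided $c_0\ne1$.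 -/
/-!
Since mixed partial derivatives of a `C²` function commute, a solution of the transport equation
`Z_t = -Z_x` satisfies `Z_tt = -Z_xt = -Z_tx = Z_xx`, so `w + Z` still solves the wave equation.
Differentiating the inflow condition in `t` gives `Z_t(0,t) = -c₀ w_t(0,t)`, hence
`Z_x(0,t) = c₀ w_t(0,t)`, and the anti-damping `w_x(0,t) = -q w_t(0,t)` becomes
`(w + Z)_x(0,t) = (c₀ - q) w_t(0,t) = (c₀ - q)/(1 - c₀) · (w + Z)_t(0,t)`.
-/

open Function

section PartialDerivatives

variable {E : Type*} [NormedAddCommGroup E] [NormedSpace ℝ E]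

lemma DifferentiableAt.hasDerivAt_fst_slice {g : ℝ × ℝ → E} {x t : ℝ}
    (hg : DifferentiableAt ℝ g (x, t)) :
    HasDerivAt (fun y => g (y, t)) (fderiv ℝ g (x, t) (1, 0)) x := by
  simpa [comp_def] using
    hg.hasFDerivAt.comp_hasDerivAt x ((hasDerivAt_id x).prodMk (hasDerivAt_const x t))

lemma DifferentiableAt.hasDerivAt_snd_slice {g : ℝ × ℝ → E} {x t : ℝ}
    (hg : DifferentiableAt ℝ g (x, t)) :
    HasDerivAt (fun s => g (x, s)) (fderiv ℝ g (x, t) (0, 1)) t := by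
  simpa [comp_def] using
    hg.hasFDerivAt.comp_hasDerivAt t ((hasDerivAt_const t x).prodMk (hasDerivAt_id t))

theorem ContDiff.partial_deriv_comm {f fx ft : ℝ → ℝ → E} {x t : ℝ} {fxt ftx : E}
    (hf : ContDiff ℝ 2 (uncurry f))
    (hfx : ∀ x t, HasDerivAt (fun y => f y t) (fx x t) x)
    (hft : ∀ x t, HasDerivAt (fun s => f x s) (ft x t) t)
    (hfxt : HasDerivAt (fun s => fx x s) fxt t)
    (hftx : HasDerivAt (fun y => ft y t) ftx x) :
    fxt = ftx := by
  set G := fderiv ℝ (uncurry f)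
  set D := fderiv ℝ G (x, t)
  have hdf : Differentiable ℝ (uncurry f) := hf.differentiable two_ne_zero
  have hdG : Differentiable ℝ G := (hf.fderiv_right le_rfl).differentiable one_ne_zero
  have hfx_eq : fx = fun y s => G (y, s) (1, 0) := by
    ext y s; exact (hfx y s).unique (hdf _).hasDerivAt_fst_slice
  have hft_eq : ft = fun y s => G (y, s) (0, 1) := by
    ext y s; exact (hft y s).unique (hdf _).hasDerivAt_snd_slice
  subst hfx_eq hft_eq
  have hxt : fxt = D (0, 1) (1, 0) := hfxt.unique <| by
    simpa using (hdG _).hasDerivAt_snd_slice.clm_apply (hasDerivAt_const t ((1 : ℝ), (0 : ℝ)))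
  have htx : ftx = D (1, 0) (0, 1) := hftx.unique <| by
    simpa using (hdG _).hasDerivAt_fst_slice.clm_apply (hasDerivAt_const x ((0 : ℝ), (1 : ℝ)))
  rw [hxt, htx]
  exact hf.contDiffAt.isSymmSndFDerivAt (by simp) _ _

end PartialDerivatives

theorem transport_solution_wave {Z Zx Zt Zxx Ztt : ℝ → ℝ → ℝ}
    (hZ : ContDiff ℝ 2 (uncurry Z))
    (hZx : ∀ x t, HasDerivAt (fun y => Z y t) (Zx x t) x)
    (hZt : ∀ x t, HasDerivAt (fun s => Z x s) (Zt x t) t)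
    (hZxx : ∀ x t, HasDerivAt (fun y => Zx y t) (Zxx x t) x)
    (hZtt : ∀ x t, HasDerivAt (fun s => Zt x s) (Ztt x t) t)
    (htransport : ∀ x t, Zt x t = -Zx x t) (x t : ℝ) :
    Ztt x t = Zxx x t := by
  have hZx_eq : Zx = fun y s => -Zt y s := by ext y s; rw [htransport, neg_neg]
  have hxt : HasDerivAt (fun s => Zx x s) (-Ztt x t) t := by
    rw [hZx_eq]; exact (hZtt x t).neg
  have htx : HasDerivAt (fun y => Zt y t) (-Zxx x t) x := by
    simp only [htransport]; exact (hZxx x t).neg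
  exact neg_injective (hZ.partial_deriv_comm hZx hZt hxt htx)

theorem stmt14_general
    (q c0 : ℝ)
    (hc0' : c0 ≠ 1)
    (w wx wt wxx wtt : ℝ → ℝ → ℝ)
    (hwt : ∀ x t, HasDerivAt (fun s => w x s) (wt x t) t)
    (hwave : ∀ x t, wtt x t = wxx x t)
    (hwbc : ∀ t, wx 0 t = -q * wt 0 t)
    (Z Zx Zt Zxx Ztt : ℝ → ℝ → ℝ)
    (hsmZ : ContDiff ℝ 2 (Function.uncurry Z))
    (hZx : ∀ x t, HasDerivAt (fun y => Z y t) (Zx x t) x)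
    (hZt : ∀ x t, HasDerivAt (fun s => Z x s) (Zt x t) t)
    (hZxx : ∀ x t, HasDerivAt (fun y => Zx y t) (Zxx x t) x)
    (hZtt : ∀ x t, HasDerivAt (fun s => Zt x s) (Ztt x t) t)
    (htransport : ∀ x t, Zt x t = -Zx x t)
    (hZbc : ∀ t, Z 0 t = -c0 * w 0 t) :
    (∀ x t, wtt x t + Ztt x t = wxx x t + Zxx x t) ∧
    (∀ t, wx 0 t + Zx 0 t = (c0 - q) / (1 - c0) * (wt 0 t + Zt 0 t)) := by
  refine ⟨fun x t => ?_, fun t => ?_⟩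
  · rw [hwave, transport_solution_wave hsmZ hZx hZt hZxx hZtt htransport]
  · have hZt0 : Zt 0 t = -c0 * wt 0 t :=
      (hZt 0 t).unique (by simpa only [hZbc] using (hwt 0 t).const_mul (-c0))
    have hZx0 : Zx 0 t = c0 * wt 0 t := by linarith [htransport 0 t]
    rw [hwbc, hZx0, hZt0]
    field_simp [sub_ne_zero.mpr hc0'.symm]
    ring

/-- Adding a transport state `Z` with inflow `Z(0,t) = -c₀ w(0,t)` converts the
anti-damper `wₓ(0,t) = -q wₜ(0,t)` into the passive damper
`w̃ₓ(0,t) = ((c₀-q)/(1-c₀)) w̃ₜ(0,t)` for `w̃ = w + Z`, which again solves the wave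
equation. -/
theorem stmt14
    (q c0 : ℝ) (hq : 0 < q) (hq1 : q ≠ 1)
    (hc0 : (c0 - q) / (1 - c0) > 0) (hc0' : c0 ≠ 1)
    (w wx wt wxx wtt : ℝ → ℝ → ℝ)
    (hsmw : ContDiff ℝ 2 (Function.uncurry w))
    (hwx : ∀ x t, HasDerivAt (fun y => w y t) (wx x t) x)
    (hwt : ∀ x t, HasDerivAt (fun s => w x s) (wt x t) t)
    (hwxx : ∀ x t, HasDerivAt (fun y => wx y t) (wxx x t) x)
    (hwtt : ∀ x t, HasDerivAt (fun s => wt x s) (wtt x t) t)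
    (hwave : ∀ x t, wtt x t = wxx x t)
    (hwbc : ∀ t, wx 0 t = -q * wt 0 t)
    (Z Zx Zt Zxx Ztt : ℝ → ℝ → ℝ)
    (hsmZ : ContDiff ℝ 2 (Function.uncurry Z))
    (hZx : ∀ x t, HasDerivAt (fun y => Z y t) (Zx x t) x)
    (hZt : ∀ x t, HasDerivAt (fun s => Z x s) (Zt x t) t)
    (hZxx : ∀ x t, HasDerivAt (fun y => Zx y t) (Zxx x t) x)
    (hZtt : ∀ x t, HasDerivAt (fun s => Zt x s) (Ztt x t) t)
    (htransport : ∀ x t, Zt x t = -Zx x t)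
    (hZbc : ∀ t, Z 0 t = -c0 * w 0 t) :
    (∀ x t, wtt x t + Ztt x t = wxx x t + Zxx x t) ∧
    (∀ t, wx 0 t + Zx 0 t = (c0 - q) / (1 - c0) * (wt 0 t + Zt 0 t)) :=
  stmt14_general q c0 hc0' w wx wt wxx wtt hwt hwave hwbc Z Zx Zt Zxx Ztt hsmZ hZx hZt hZxx hZtt
    htransport hZbc
end
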